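/- arXiv:1210.0445 — 5 statements merged into one kernel-verified Lean document; each statement's English description precedes it below -/
import Mathlib

section
/- Let a ∈ ℤ, let n ≥ 1 be a natural number, and let f : ℤ → ℝ. Define u : ℤ → ℝ by u(t) = Σ_{s=a}^{t−n} C(t−s−1, n−1)·f(s), where the sum is empty (so u(t) = 0) when t < a+n; this equals the delta left fractional sum Δ_a^{−n} f(t) = (1/(n−1)!) Σ_{s=a}^{t−n} (t−σ(s))^(n−1) f(s). Then u solves the initial value problem: (i) Δ^n u(t) = f(t) for every integer t ≥ a, and (ii) u(a+j−1) = 0 for j = 1, 2, …, n. -/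
lemma neg_one_pow_sub' {n i : ℕ} (h : i ≤ n) : ((-1:ℝ))^(n-i) = (-1)^(n+i) := by
  have h2 : n + i = (n - i) + 2 * i := by omega
  rw [h2, pow_add, pow_mul]
  simp

lemma step_lemma (n : ℕ) (g : ℕ → ℝ) :
    ∑ i ∈ Finset.range (n+2), (-1:ℝ)^(n+1+i) * ((n+1).choose i) * g i
      = ∑ i ∈ Finset.range (n+1), (-1:ℝ)^(n+i) * (n.choose i) * (g (i+1) - g i) := by
  have hB : ∑ i ∈ Finset.range (n+1), (-1:ℝ)^(n+i) * (n.choose i) * g i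
      = (∑ i ∈ Finset.range n, (-1:ℝ)^(n+i+1) * (n.choose (i+1)) * g (i+1))
        + (-1:ℝ)^n * g 0 := by
    rw [Finset.sum_range_succ']
    congr 1
    simp
  have hC : ∑ i ∈ Finset.range (n+1), (-1:ℝ)^(n+i) * (n.choose (i+1)) * g (i+1)
      = ∑ i ∈ Finset.range n, (-1:ℝ)^(n+i) * (n.choose (i+1)) * g (i+1) := by
    rw [Finset.sum_range_succ, Nat.choose_succ_self]
    simp
  rw [Finset.sum_range_succ']
  have hterm : ∀ i, (-1:ℝ)^(n+1+(i+1)) * ((n+1).choose (i+1)) * g (i+1)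
      = (-1:ℝ)^(n+i) * (n.choose i) * g (i+1)
        + (-1:ℝ)^(n+i) * (n.choose (i+1)) * g (i+1) := by
    intro i
    rw [Nat.choose_succ_succ]
    push_cast
    have : (-1:ℝ)^(n+1+(i+1)) = (-1:ℝ)^(n+i) := by
      have : n+1+(i+1) = (n+i) + 2 := by omega
      rw [this, pow_add]; norm_num
    rw [this]; ring
  simp only [hterm]
  rw [Finset.sum_add_distrib, hC]
  have hC2 : ∑ i ∈ Finset.range n, (-1:ℝ)^(n+i) * (n.choose (i+1)) * g (i+1)
      = - ∑ i ∈ Finset.range n, (-1:ℝ)^(n+i+1) * (n.choose (i+1)) * g (i+1) := by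
    rw [← Finset.sum_neg_distrib]
    refine Finset.sum_congr rfl fun i _ => ?_
    rw [pow_succ]; ring
  rw [hC2]
  have hRHS : ∑ i ∈ Finset.range (n+1), (-1:ℝ)^(n+i) * (n.choose i) * (g (i+1) - g i)
      = (∑ i ∈ Finset.range (n+1), (-1:ℝ)^(n+i) * (n.choose i) * g (i+1))
        - ∑ i ∈ Finset.range (n+1), (-1:ℝ)^(n+i) * (n.choose i) * g i := by
    rw [← Finset.sum_sub_distrib]
    refine Finset.sum_congr rfl fun i _ => by ring
  rw [hRHS, hB]
  have : (-1:ℝ)^(n+1+0) * ((n+1).choose 0) * g 0 = -((-1:ℝ)^n * g 0) := by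
    simp [pow_succ]
  rw [this]
  ring

lemma key_lemma (m : ℕ) : ∀ k : ℕ, 1 ≤ k →
    ∑ i ∈ Finset.range (m+2), (-1:ℝ)^(m+1+i) * ((m+1).choose i) * ((k+i-1).choose m) = 0 := by
  induction m with
  | zero =>
    intro k hk
    rw [Finset.sum_range_succ, Finset.sum_range_one]
    simp
  | succ m ih =>
    intro k hk
    have hs := step_lemma (m+1) (fun i => ((k+i-1).choose (m+1) : ℝ))
    rw [show m+1+2 = m+1+1+1 from rfl] at *
    rw [hs]
    have hterm : ∀ i, ((k+(i+1)-1).choose (m+1) : ℝ) - ((k+i-1).choose (m+1) : ℝ)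
        = ((k+i-1).choose m : ℝ) := by
      intro i
      have h1 : k+(i+1)-1 = (k+i-1)+1 := by omega
      rw [h1, Nat.choose_succ_succ]
      push_cast
      ring
    calc ∑ i ∈ Finset.range (m+1+1), (-1:ℝ)^(m+1+i) * ((m+1).choose i) *
            (((k+(i+1)-1).choose (m+1) : ℝ) - ((k+i-1).choose (m+1) : ℝ))
        = ∑ i ∈ Finset.range (m+2), (-1:ℝ)^(m+1+i) * ((m+1).choose i) * ((k+i-1).choose m) := by
          refine Finset.sum_congr rfl fun i _ => by rw [hterm]
      _ = 0 := ih k hk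

lemma coeff_zero (n k : ℕ) (hn : 1 ≤ n) (hk : 1 ≤ k) :
    ∑ i ∈ Finset.range (n+1), (-1:ℝ)^(n+i) * (n.choose i) *
      (if n ≤ k + i then ((k+i-1).choose (n-1) : ℝ) else 0) = 0 := by
  have h1 : ∀ i, (if n ≤ k + i then ((k+i-1).choose (n-1):ℝ) else 0)
      = ((k+i-1).choose (n-1):ℝ) := by
    intro i
    split
    · rfl
    · rw [Nat.choose_eq_zero_of_lt (by omega)]; simp
  simp only [h1]
  obtain ⟨m, rfl⟩ : ∃ m, n = m + 1 := ⟨n-1, by omega⟩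
  simpa using key_lemma m k hk

/-- The delta left fractional sum of integer order n,
u(t) = Σ_{s=a}^{t−n} C(t−s−1, n−1) f(s)  (with s = a+j), solves
Δ^n u(t) = f(t) on ℕ_a with u(a+j−1) = 0 for j = 1,…,n. -/
theorem delta_left_int_sum_ivp (a : ℤ) (n : ℕ) (hn : 1 ≤ n) (f u : ℤ → ℝ)
    (hu : ∀ t : ℤ, u t =
      ∑ j ∈ Finset.range (t - (n : ℤ) - a + 1).toNat,
        ((t - a - (j : ℤ) - 1).toNat.choose (n - 1) : ℝ) * f (a + j)) :
    (∀ t : ℤ, a ≤ t →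
        ∑ i ∈ Finset.range (n + 1),
          (-1 : ℝ) ^ (n - i) * (n.choose i : ℝ) * u (t + i) = f t) ∧
    (∀ j : ℕ, 1 ≤ j → j ≤ n → u (a + (j : ℤ) - 1) = 0) := by
  constructor
  · intro t ht
    obtain ⟨m, rfl⟩ : ∃ m : ℕ, t = a + m := ⟨(t-a).toNat, by omega⟩
    have hui : ∀ i ∈ Finset.range (n+1), u (a + (m:ℤ) + i) =
        ∑ j ∈ Finset.range (m+1),
          (if j + n ≤ m + i then ((m+i-1-j).choose (n-1) : ℝ) else 0) * f (a + j) := by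
      intro i hi
      have hi' : i ≤ n := by
        have := Finset.mem_range.mp hi; omega
      rw [hu]
      have hr : (a + (m:ℤ) + i - n - a + 1).toNat = m + i + 1 - n := by omega
      rw [hr]
      calc ∑ j ∈ Finset.range (m+i+1-n),
              (((a + (m:ℤ) + i - a - j - 1).toNat.choose (n-1) : ℝ)) * f (a + j)
          = ∑ j ∈ Finset.range (m+i+1-n),
              (if j + n ≤ m + i then ((m+i-1-j).choose (n-1) : ℝ) else 0) * f (a + j) := by
            refine Finset.sum_congr rfl fun j hj => ?_
            have hj' : j < m + i + 1 - n := Finset.mem_range.mp hj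
            have h2 : j + n ≤ m + i := by omega
            have h1 : (a + (m:ℤ) + i - a - j - 1).toNat = m + i - 1 - j := by omega
            rw [h1, if_pos h2]
        _ = ∑ j ∈ Finset.range (m+1),
              (if j + n ≤ m + i then ((m+i-1-j).choose (n-1) : ℝ) else 0) * f (a + j) := by
            refine Finset.sum_subset (Finset.range_subset_range.mpr (by omega)) ?_
            intro j hj hj2
            have h1 := Finset.mem_range.mp hj
            have h2 : ¬ (j < m + i + 1 - n) := fun h => hj2 (Finset.mem_range.mpr h)
            rw [if_neg (by omega), zero_mul]
    calc ∑ i ∈ Finset.range (n + 1),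
            (-1 : ℝ) ^ (n - i) * (n.choose i : ℝ) * u (a + (m:ℤ) + i)
        = ∑ i ∈ Finset.range (n + 1), ∑ j ∈ Finset.range (m+1),
            ((-1 : ℝ) ^ (n + i) * (n.choose i : ℝ) *
              (if j + n ≤ m + i then ((m+i-1-j).choose (n-1) : ℝ) else 0)) * f (a + j) := by
          refine Finset.sum_congr rfl fun i hi => ?_
          have hi' : i ≤ n := by have := Finset.mem_range.mp hi; omega
          rw [hui i hi, Finset.mul_sum, neg_one_pow_sub' hi']
          exact Finset.sum_congr rfl fun j _ => by ring
      _ = ∑ j ∈ Finset.range (m+1),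
            (∑ i ∈ Finset.range (n + 1),
              (-1 : ℝ) ^ (n + i) * (n.choose i : ℝ) *
                (if j + n ≤ m + i then ((m+i-1-j).choose (n-1) : ℝ) else 0)) * f (a + j) := by
          rw [Finset.sum_comm]
          exact Finset.sum_congr rfl fun j _ => by rw [Finset.sum_mul]
      _ = ∑ j ∈ Finset.range (m+1), (if j = m then (1:ℝ) else 0) * f (a + j) := by
          refine Finset.sum_congr rfl fun j hj => ?_
          have hjm : j ≤ m := by have := Finset.mem_range.mp hj; omega
          congr 1
          by_cases hje : j = m
          · subst hje
            rw [if_pos rfl, Finset.sum_eq_single n]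
            · rw [if_pos (by omega)]
              have h1 : j + n - 1 - j = n - 1 := by omega
              have h2 : (-1:ℝ)^(n+n) = 1 := by
                rw [show n + n = 2 * n from by ring, pow_mul]; norm_num
              rw [h1, h2, Nat.choose_self, Nat.choose_self]
              norm_num
            · intro i hi hne
              have hi' : i ≤ n := by have := Finset.mem_range.mp hi; omega
              rw [if_neg (by omega), mul_zero]
            · intro h
              exact absurd (Finset.self_mem_range_succ n) h
          · rw [if_neg hje]
            have hk : 1 ≤ m - j := by omega
            calc ∑ i ∈ Finset.range (n + 1),
                  (-1 : ℝ) ^ (n + i) * (n.choose i : ℝ) *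
                    (if j + n ≤ m + i then ((m+i-1-j).choose (n-1) : ℝ) else 0)
                = ∑ i ∈ Finset.range (n + 1),
                  (-1 : ℝ) ^ (n + i) * (n.choose i : ℝ) *
                    (if n ≤ (m - j) + i then (((m-j)+i-1).choose (n-1) : ℝ) else 0) := by
                  refine Finset.sum_congr rfl fun i _ => ?_
                  by_cases h : j + n ≤ m + i
                  · rw [if_pos h, if_pos (by omega),
                      show m + i - 1 - j = (m - j) + i - 1 from by omega]
                  · rw [if_neg h, if_neg (by omega)]
              _ = 0 := coeff_zero n (m - j) hn hk
      _ = f (a + m) := by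
          simp only [ite_mul, one_mul, zero_mul]
          rw [Finset.sum_ite_eq' (Finset.range (m+1)) m (fun j => f (a + (j:ℤ)))]
          simp
  · intro j hj1 hj2
    rw [hu]
    have h0 : (a + (j:ℤ) - 1 - n - a + 1).toNat = 0 := by omega
    rw [h0]
    simp
end

section
/- Let b ∈ ℝ, let α > 0 be real with n−1 < α < n for a natural number n, and let y : ℝ → ℝ. Define the delta right fractional sum G(τ) = (1/Γ(n−α)) Σ_{j=0}^{b−τ−(n−α)} [Γ(b−j−τ)/Γ(b−j−τ−(n−α)+1)]·y(b−j) for τ on the grid b−(n−α)−ℕ, and the nabla right fractional sum based at b+1, K'(τ) = (1/Γ(n−α)) Σ_{j=0}^{b−τ} [Γ(j+n−α)/Γ(j+1)]·y(τ+j) for τ ∈ b−ℕ (sums over negative ranges being empty). Then the dual identity (_bΔ^α y)(t+α) = (_{b+1}∇^α y)(t) holds for every t = b−n−m with m ∈ ℕ: Σ_{i=0}^{n} (−1)^{n−i} C(n,i) G(t+α−i) = Σ_{i=0}^{n} (−1)^i C(n,i) K'(t+i). -/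
/-- Dual identity (ₑΔ^α y)(t+α) = (ₑ₊₁∇^α y)(t) for t = b−n−m, where
G = ₑΔ^{−(n−α)} y and K' = ₑ₊₁∇^{−(n−α)} y. -/
theorem delta_nabla_right_dual (b α : ℝ) (n : ℕ)
    (hα : 0 < α) (hn1 : (n : ℝ) - 1 < α) (hn2 : α < n) (y G K' : ℝ → ℝ)
    (hG : ∀ q : ℕ, G (b - ((n : ℝ) - α) - q) =
      (1 / Real.Gamma ((n : ℝ) - α)) *
        ∑ j ∈ Finset.range (q + 1),
          Real.Gamma (b - j - (b - ((n : ℝ) - α) - q)) /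
            Real.Gamma (b - j - (b - ((n : ℝ) - α) - q) - ((n : ℝ) - α) + 1) *
            y (b - j))
    (hK' : ∀ q : ℕ, K' (b - q) =
      (1 / Real.Gamma ((n : ℝ) - α)) *
        ∑ j ∈ Finset.range (q + 1),
          Real.Gamma ((j : ℝ) + ((n : ℝ) - α)) / Real.Gamma ((j : ℝ) + 1) *
            y ((b - q) + j)) :
    ∀ m : ℕ,
      ∑ i ∈ Finset.range (n + 1),
        (-1 : ℝ) ^ (n - i) * (n.choose i : ℝ) * G ((b - n - m) + α - i)
      = ∑ i ∈ Finset.range (n + 1),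
        (-1 : ℝ) ^ i * (n.choose i : ℝ) * K' ((b - n - m) + i) := by
  intro m
  refine Eq.trans ?_ (Finset.sum_range_reflect
    (fun i => (-1 : ℝ) ^ i * (n.choose i : ℝ) * K' ((b - n - m) + i)) (n + 1))
  apply Finset.sum_congr rfl
  intro i hi
  have hin : i ≤ n := Nat.lt_succ_iff.mp (Finset.mem_range.mp hi)
  simp only [Nat.add_sub_cancel]
  rw [Nat.choose_symm hin]
  have hGa : (b - n - m) + α - i = b - ((n : ℝ) - α) - ((m + i : ℕ) : ℝ) := by
    push_cast; ring
  have hKa : (b - n - m) + ((n - i : ℕ) : ℝ) = b - ((m + i : ℕ) : ℝ) := by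
    rw [Nat.cast_sub hin]; push_cast; ring
  rw [hGa, hKa, hG (m + i), hK' (m + i)]
  congr 1
  rw [← Finset.sum_range_reflect
    (fun j => Real.Gamma ((j : ℝ) + ((n : ℝ) - α)) / Real.Gamma ((j : ℝ) + 1) *
      y ((b - ((m + i : ℕ) : ℝ)) + j)) (m + i + 1)]
  congr 1
  apply Finset.sum_congr rfl
  intro j hj
  have hj' : j ≤ m + i := Nat.lt_succ_iff.mp (Finset.mem_range.mp hj)
  simp only [Nat.add_sub_cancel]
  have hc : ((m + i - j : ℕ) : ℝ) = ((m + i : ℕ) : ℝ) - j := by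
    rw [Nat.cast_sub hj']
  rw [hc]
  rw [show b - ↑j - (b - ((n : ℝ) - α) - ((m + i : ℕ) : ℝ))
      = ((m + i : ℕ) : ℝ) - ↑j + ((n : ℝ) - α) from by ring,
    show ((m + i : ℕ) : ℝ) - ↑j + ((n : ℝ) - α) - ((n : ℝ) - α) + 1
      = ((m + i : ℕ) : ℝ) - ↑j + 1 from by ring,
    show b - ((m + i : ℕ) : ℝ) + (((m + i : ℕ) : ℝ) - ↑j) = b - ↑j from by ring]
end

section
/- Let a ∈ ℝ, let α > 0 be real with n−1 < α < n for a natural number n, and let f : ℝ → ℝ. Define F(τ) = (1/Γ(n−α)) Σ_{j=0}^{τ−a−(n−α)} [Γ(τ−a−j)/Γ(τ−a−j−(n−α)+1)]·f(a+j), the delta left fractional sum Δ_a^{−(n−α)} f(τ) for τ on the grid a+(n−α)+ℕ. Then for every m ∈ ℕ and t = a+(n−α)+m, the Riemann delta left fractional difference equals the binomial one: Σ_{i=0}^{n} (−1)^{n−i} C(n,i) F(t+i) = Σ_{k=0}^{n+m} (−1)^k binom(α,k)·f(a+n+m−k) (note a+n+m−k = t+α−k). -/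
/-- Generalized binomial coefficient binom(α,k) = α(α−1)⋯(α−k+1)/k!. -/
noncomputable def rbinom (α : ℝ) (k : ℕ) : ℝ :=
  (∏ i ∈ Finset.range k, (α - i)) / (Nat.factorial k)


lemma rbinom_pascal (x : ℝ) (s : ℕ) :
    rbinom (x+1) (s+1) = rbinom x (s+1) + rbinom x s := by
  unfold rbinom
  have h1 : ∏ i ∈ Finset.range (s+1), (x + 1 - i)
      = (∏ i ∈ Finset.range s, (x - i)) * (x + 1) := by
    rw [Finset.prod_range_succ']
    congr 1
    · apply Finset.prod_congr rfl; intro i _; push_cast; ring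
    · norm_num
  have h2 : ∏ i ∈ Finset.range (s+1), (x - i)
      = (∏ i ∈ Finset.range s, (x - i)) * (x - s) := Finset.prod_range_succ _ _
  rw [h1, h2, Nat.factorial_succ]
  have hs : (Nat.factorial s : ℝ) ≠ 0 := Nat.cast_ne_zero.mpr (Nat.factorial_ne_zero s)
  have hs1 : ((s:ℝ) + 1) ≠ 0 := by positivity
  push_cast
  field_simp
  ring

noncomputable def czf (μ : ℝ) (s : ℤ) : ℝ :=
  if 0 ≤ s then (∏ i ∈ Finset.range s.toNat, (μ + i)) / (Nat.factorial s.toNat) else 0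

noncomputable def Kf (x : ℝ) (s : ℤ) : ℝ :=
  if 0 ≤ s then (-1)^s.toNat * rbinom x s.toNat else 0

lemma czf_neg (μ : ℝ) {s : ℤ} (h : s < 0) : czf μ s = 0 := by
  simp [czf, not_le.mpr h]

lemma prod_neg_shift (μ : ℝ) (t : ℕ) :
    ∏ i ∈ Finset.range t, (-μ - (i:ℝ)) = (-1)^t * ∏ i ∈ Finset.range t, (μ + i) := by
  induction t with
  | zero => simp
  | succ t ih => rw [Finset.prod_range_succ, Finset.prod_range_succ, ih]; push_cast; ring

lemma czf_eq_K (μ : ℝ) (s : ℤ) : czf μ s = Kf (-μ) s := by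
  unfold czf Kf rbinom
  by_cases h : 0 ≤ s
  · simp only [h, if_true]
    rw [prod_neg_shift]
    field_simp
    rw [← pow_mul, Even.neg_one_pow ⟨s.toNat, by ring⟩, mul_one]
  · simp [h]

lemma Kf_pascal (x : ℝ) (s : ℤ) : Kf (x+1) s = Kf x s - Kf x (s-1) := by
  rcases lt_trichotomy s 0 with h | h | h
  · simp [Kf, not_le.mpr h, not_le.mpr (by omega : s - 1 < 0)]
    intro h'; omega
  · subst h
    simp [Kf, (by omega : ¬ (0:ℤ) ≤ -1), rbinom]
  · have h0 : 0 ≤ s := le_of_lt h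
    have h1 : 0 ≤ s - 1 := by omega
    obtain ⟨t, ht⟩ : ∃ t : ℕ, s = (t:ℤ) + 1 := ⟨(s-1).toNat, by omega⟩
    subst ht
    simp only [Kf, h0, h1, if_true]
    have e1 : ((t:ℤ)+1).toNat = t + 1 := by omega
    have e2 : ((t:ℤ)+1-1).toNat = t := by omega
    rw [e1, e2, rbinom_pascal]
    ring_nf

lemma key_sum (μ : ℝ) : ∀ n : ℕ, ∀ s : ℤ,
    ∑ u ∈ Finset.range (n+1), (-1:ℝ)^u * (n.choose u : ℝ) * czf μ (s - u)
      = Kf ((n:ℝ) - μ) s := by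
  intro n
  induction n with
  | zero =>
      intro s
      simp [czf_eq_K μ s]
  | succ n ih =>
      intro s
      have step : ∑ u ∈ Finset.range (n+2), (-1:ℝ)^u * ((n+1).choose u : ℝ) * czf μ (s - u)
          = (∑ u ∈ Finset.range (n+1), (-1:ℝ)^u * (n.choose u : ℝ) * czf μ (s - u))
            - (∑ u ∈ Finset.range (n+1), (-1:ℝ)^u * (n.choose u : ℝ) * czf μ ((s-1) - u)) := by
        rw [Finset.sum_range_succ' (fun u => (-1:ℝ)^u * ((n+1).choose u : ℝ) * czf μ (s - u))]
        push_cast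
        have expand : ∀ u ∈ Finset.range (n+1),
            (-1:ℝ)^(u+1) * ((n+1).choose (u+1) : ℝ) * czf μ (s - ((u:ℤ) + 1))
            = -((-1:ℝ)^u * (n.choose u : ℝ) * czf μ ((s-1) - u))
              + (-1:ℝ)^(u+1) * (n.choose (u+1) : ℝ) * czf μ (s - ((u:ℤ)+1)) := by
          intro u _
          rw [Nat.choose_succ_succ]
          push_cast
          have : s - (↑u + 1) = s - 1 - ↑u := by ring
          rw [this]
          ring
        rw [Finset.sum_congr rfl expand, Finset.sum_add_distrib]
        have shift : ∑ u ∈ Finset.range (n+1),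
            (-1:ℝ)^(u+1) * (n.choose (u+1) : ℝ) * czf μ (s - ((u:ℤ)+1))
            = (∑ u ∈ Finset.range (n+1), (-1:ℝ)^u * (n.choose u : ℝ) * czf μ (s - u))
              - czf μ s := by
          have h2 : ∑ u ∈ Finset.range (n+2), (-1:ℝ)^u * (n.choose u : ℝ) * czf μ (s - u)
              = (∑ u ∈ Finset.range (n+1), (-1:ℝ)^u * (n.choose u : ℝ) * czf μ (s - u)) := by
            rw [Finset.sum_range_succ]
            simp [Nat.choose_eq_zero_of_lt (by omega : n < n + 1)]
          rw [← h2, Finset.sum_range_succ' (fun u => (-1:ℝ)^u * (n.choose u : ℝ) * czf μ (s - u))]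
          push_cast
          simp
        rw [shift]
        simp only [Nat.choose_zero_right, Nat.cast_one, sub_zero, one_mul, neg_mul,
          Finset.sum_neg_distrib]
        ring
      push_cast at step ⊢
      rw [step, ih s, ih (s-1)]
      have h3 : ((n:ℝ)+1) - μ = ((n:ℝ) - μ) + 1 := by ring
      rw [h3, Kf_pascal]

/-- The Riemann delta left fractional difference coincides with the
binomial (Grünwald–Letnikov type) one on the grid t = a+(n−α)+m,
where F = Δ_a^{−(n−α)} f. -/
theorem delta_left_riemann_eq_binomial (a α : ℝ) (n : ℕ)
    (hα : 0 < α) (hn1 : (n : ℝ) - 1 < α) (hn2 : α < n) (f F : ℝ → ℝ)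
    (hF : ∀ p : ℕ, F (a + ((n : ℝ) - α) + p) =
      (1 / Real.Gamma ((n : ℝ) - α)) *
        ∑ j ∈ Finset.range (p + 1),
          Real.Gamma ((a + ((n : ℝ) - α) + p) - a - j) /
            Real.Gamma ((a + ((n : ℝ) - α) + p) - a - j - ((n : ℝ) - α) + 1) *
            f (a + j)) :
    ∀ m : ℕ,
      ∑ i ∈ Finset.range (n + 1),
        (-1 : ℝ) ^ (n - i) * (n.choose i : ℝ) * F ((a + ((n : ℝ) - α) + m) + i)
      = ∑ k ∈ Finset.range (n + m + 1),
        (-1 : ℝ) ^ k * rbinom α k * f (a + n + m - k) := by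
  intro m
  set μ : ℝ := (n:ℝ) - α with hμdef
  have hμ : 0 < μ := by rw [hμdef]; linarith
  have hμne : Real.Gamma μ ≠ 0 := (Real.Gamma_pos_of_pos hμ).ne'
  have hg : ∀ r : ℕ, Real.Gamma (μ + r) = Real.Gamma μ * ∏ i ∈ Finset.range r, (μ + i) := by
    intro r; induction r with
    | zero => simp
    | succ r ih =>
        have hne : μ + (r:ℝ) ≠ 0 := by positivity
        rw [show μ + ((r+1:ℕ):ℝ) = (μ + r) + 1 by push_cast; ring, Real.Gamma_add_one hne, ih,
          Finset.prod_range_succ]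
        ring
  have hF' : ∀ p : ℕ, F (a + μ + p)
      = ∑ j ∈ Finset.range (p+1), czf μ ((p:ℤ) - j) * f (a + j) := by
    intro p
    rw [hF p, Finset.mul_sum]
    apply Finset.sum_congr rfl
    intro j hj
    have hjp : j ≤ p := by simpa [Nat.lt_succ_iff] using hj
    have e1 : (a + μ + p) - a - j = μ + ((p - j : ℕ) : ℝ) := by
      push_cast [Nat.cast_sub hjp]; ring
    have e2 : (a + μ + p) - a - j - μ + 1 = ((p - j : ℕ) : ℝ) + 1 := by
      push_cast [Nat.cast_sub hjp]; ring
    rw [e2, e1, hg, Real.Gamma_nat_eq_factorial]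
    have e4 : (0:ℤ) ≤ (p:ℤ) - j := by omega
    have e3 : ((p:ℤ) - j).toNat = p - j := by omega
    simp only [czf, e4, if_true, e3]
    field_simp
  calc
    ∑ i ∈ Finset.range (n + 1),
        (-1 : ℝ) ^ (n - i) * (n.choose i : ℝ) * F ((a + μ + m) + i)
      = ∑ i ∈ Finset.range (n+1), ∑ j ∈ Finset.range (n+m+1),
          ((-1:ℝ)^(n-i) * (n.choose i : ℝ)) * (czf μ (((m+i:ℕ):ℤ) - j) * f (a+j)) := by
        apply Finset.sum_congr rfl
        intro i hi
        have hin : i ≤ n := by simpa [Nat.lt_succ_iff] using hi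
        have harg : (a + μ + (m:ℝ)) + i = a + μ + ((m+i : ℕ):ℝ) := by push_cast; ring
        rw [harg, hF' (m+i)]
        rw [Finset.sum_subset (Finset.range_subset_range.mpr (by omega : m+i+1 ≤ n+m+1))
          (by
            intro j hj hj2
            have hlt : (((m+i:ℕ):ℤ) - j) < 0 := by
              simp only [Finset.mem_range] at hj hj2; omega
            rw [czf_neg μ hlt, zero_mul])]
        rw [Finset.mul_sum]
    _ = ∑ j ∈ Finset.range (n+m+1),
          (∑ i ∈ Finset.range (n+1),
            (-1:ℝ)^(n-i) * (n.choose i : ℝ) * czf μ (((m+i:ℕ):ℤ) - j)) * f (a+j) := by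
        rw [Finset.sum_comm]
        apply Finset.sum_congr rfl
        intro j _
        rw [Finset.sum_mul]
        apply Finset.sum_congr rfl
        intro i _
        ring
    _ = ∑ j ∈ Finset.range (n+m+1), Kf α ((n:ℤ)+m-j) * f (a+j) := by
        apply Finset.sum_congr rfl
        intro j _
        congr 1
        rw [← Finset.sum_range_reflect
          (fun i => (-1:ℝ)^(n-i) * (n.choose i : ℝ) * czf μ (((m+i:ℕ):ℤ) - j)) (n+1)]
        have hstep : ∀ u ∈ Finset.range (n+1),
            (-1:ℝ)^(n-(n+1-1-u)) * (n.choose (n+1-1-u) : ℝ)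
              * czf μ (((m+(n+1-1-u):ℕ):ℤ) - j)
            = (-1:ℝ)^u * (n.choose u : ℝ) * czf μ (((n:ℤ)+m-j) - u) := by
          intro u hu
          have hun : u ≤ n := by simpa [Nat.lt_succ_iff] using hu
          have c1 : n+1-1-u = n-u := by omega
          have c2 : n-(n-u) = u := by omega
          have c3 : n.choose (n-u) = n.choose u := Nat.choose_symm hun
          have c4 : ((m+(n-u):ℕ):ℤ) - j = ((n:ℤ)+m-j) - u := by omega
          rw [c1, c2, c3, c4]
        rw [Finset.sum_congr rfl hstep, key_sum μ n ((n:ℤ)+m-j)]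
        congr 1
        rw [hμdef]; ring
    _ = ∑ k ∈ Finset.range (n + m + 1),
        (-1 : ℝ) ^ k * rbinom α k * f (a + n + m - k) := by
        rw [← Finset.sum_range_reflect
          (fun k => (-1:ℝ)^k * rbinom α k * f (a + n + m - k)) (n+m+1)]
        apply Finset.sum_congr rfl
        intro j hj
        have hjnm : j ≤ n + m := by simpa [Nat.lt_succ_iff] using hj
        have c1 : n+m+1-1-j = n+m-j := by omega
        have e4 : (0:ℤ) ≤ (n:ℤ)+m-j := by omega
        have e3 : ((n:ℤ)+m-j).toNat = n+m-j := by omega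
        simp only [Kf, e4, if_true, e3, c1]
        have : a + (n:ℝ) + m - ((n+m-j:ℕ):ℝ) = a + j := by
          push_cast [Nat.cast_sub (by omega : j ≤ n+m)]; ring
        rw [this]
end

section
/- Let a ∈ ℝ, let α > 0 be real, and let f : ℝ → ℝ. Then for every m ∈ ℕ and t = a+α+m, the Riemann delta left fractional sum equals the binomial one: (1/Γ(α)) Σ_{j=0}^{m} [Γ(α+m−j)/Γ(m−j+1)]·f(a+j) = Σ_{k=0}^{m} (−1)^k binom(−α,k)·f(a+m−k) (note a+m−k = t−α−k). -/
lemma gamma_add_nat_aux (α : ℝ) (hα : 0 < α) (k : ℕ) :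
    Real.Gamma (α + k) = (∏ i ∈ Finset.range k, (α + i)) * Real.Gamma α := by
  induction k with
  | zero => simp
  | succ n ih =>
    have hne : α + (n : ℝ) ≠ 0 := by positivity
    rw [Finset.prod_range_succ, Nat.cast_succ, show α + ((n : ℝ) + 1) = (α + n) + 1 by ring,
      Real.Gamma_add_one hne, ih]
    ring

/-- The Riemann delta left fractional sum coincides with the binomial one
at t = a+α+m. -/
theorem delta_left_sum_eq_binomial (a α : ℝ) (hα : 0 < α) (f : ℝ → ℝ) :
    ∀ m : ℕ,
      (1 / Real.Gamma α) *
        ∑ j ∈ Finset.range (m + 1),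
          Real.Gamma (α + m - j) / Real.Gamma ((m : ℝ) - j + 1) * f (a + j)
      = ∑ k ∈ Finset.range (m + 1),
        (-1 : ℝ) ^ k * rbinom (-α) k * f (a + m - k) := by
  intro m
  rw [Finset.mul_sum, ← Finset.sum_range_reflect]
  apply Finset.sum_congr rfl
  intro k hk
  have hk' : k ≤ m := Nat.lt_succ_iff.mp (Finset.mem_range.mp hk)
  have hc : ((m + 1 - 1 - k : ℕ) : ℝ) = (m : ℝ) - k := by
    have : m + 1 - 1 - k = m - k := rfl
    rw [this, Nat.cast_sub hk']
  rw [hc, show α + (m : ℝ) - ((m : ℝ) - k) = α + k by ring,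
    show (m : ℝ) - ((m : ℝ) - k) + 1 = (k : ℝ) + 1 by ring,
    show a + ((m : ℝ) - k) = a + m - k by ring,
    Real.Gamma_nat_eq_factorial, gamma_add_nat_aux α hα k]
  have hprod : ∏ i ∈ Finset.range k, (-α - (i : ℝ)) =
      (-1 : ℝ) ^ k * ∏ i ∈ Finset.range k, (α + i) := by
    calc ∏ i ∈ Finset.range k, (-α - (i : ℝ))
        = ∏ i ∈ Finset.range k, (-1 : ℝ) * (α + i) := by
          apply Finset.prod_congr rfl; intros; ring
      _ = (-1 : ℝ) ^ k * ∏ i ∈ Finset.range k, (α + i) := by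
          rw [Finset.prod_mul_distrib, Finset.prod_const, Finset.card_range]
  have hΓ : Real.Gamma α ≠ 0 := (Real.Gamma_pos_of_pos hα).ne'
  have hfac : (Nat.factorial k : ℝ) ≠ 0 := by positivity
  rw [rbinom]
  rw [show (∏ i ∈ Finset.range k, (-α - (i:ℝ))) = _ from hprod]
  field_simp
  ring_nf
  rw [mul_comm k 2, pow_mul]
  norm_num
end

section
/- Let b ∈ ℝ, let α > 0 be real with n−1 < α < n for a natural number n, and let f : ℝ → ℝ. Define G(τ) = (1/Γ(n−α)) Σ_{j=0}^{b−τ−(n−α)} [Γ(b−j−τ)/Γ(b−j−τ−(n−α)+1)]·f(b−j), the delta right fractional sum _bΔ^{−(n−α)} f(τ) for τ on the grid b−(n−α)−ℕ. Then for every m ∈ ℕ and t = b−(n−α)−m, the Riemann delta right fractional difference equals the binomial one: Σ_{i=0}^{n} (−1)^{n−i} C(n,i) G(t−i) = Σ_{k=0}^{n+m} (−1)^k binom(α,k)·f(b−n−m+k) (note b−n−m+k = t−α+k). -/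
lemma rbinom_zero (α : ℝ) : rbinom α 0 = 1 := by simp [rbinom]

lemma rbinom_succ_mul (z : ℝ) (k : ℕ) :
    ((k : ℝ) + 1) * rbinom z (k + 1) = z * rbinom (z - 1) k := by
  have h1 : ∏ i ∈ Finset.range (k + 1), (z - i) =
      z * ∏ i ∈ Finset.range k, (z - 1 - i) := by
    rw [Finset.prod_range_succ']
    simp only [Nat.cast_add, Nat.cast_one, Nat.cast_zero, sub_zero]
    rw [mul_comm]
    congr 1
    apply Finset.prod_congr rfl
    intros; ring_nf
  have hf : (Nat.factorial (k+1) : ℝ) = ((k:ℝ)+1) * Nat.factorial k := by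
    rw [Nat.factorial_succ]; push_cast; ring
  have hk : ((k:ℝ)+1) ≠ 0 := by positivity
  have hfk : (Nat.factorial k : ℝ) ≠ 0 := Nat.cast_ne_zero.2 k.factorial_ne_zero
  rw [rbinom, rbinom, h1, hf]
  field_simp

lemma rbinom_nat_cast (n i : ℕ) : rbinom (n : ℝ) i = (n.choose i : ℝ) := by
  have h : ∏ j ∈ Finset.range i, ((n : ℝ) - j) = (n.descFactorial i : ℝ) := by
    induction i with
    | zero => simp
    | succ i ih =>
      rw [Finset.prod_range_succ, ih, Nat.descFactorial_succ]
      by_cases hni : i ≤ n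
      · push_cast [Nat.cast_sub hni]; ring
      · have h1 : n.descFactorial i = 0 := Nat.descFactorial_eq_zero_iff_lt.2 (by omega)
        have h2 : n - i = 0 := by omega
        simp [h1, h2]
  rw [rbinom, h, Nat.descFactorial_eq_factorial_mul_choose]
  push_cast
  rw [mul_comm, mul_div_assoc, div_self (Nat.cast_ne_zero.2 i.factorial_ne_zero), mul_one]

lemma rbinom_vandermonde (s : ℕ) : ∀ x y : ℝ,
    ∑ i ∈ Finset.range (s + 1), rbinom x i * rbinom y (s - i) = rbinom (x + y) s := by
  induction s with
  | zero => intro x y; simp [rbinom_zero]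
  | succ s ih =>
    intro x y
    have hS : ((s : ℝ) + 1) ≠ 0 := by positivity
    apply mul_left_cancel₀ hS
    have step : ∀ i ∈ Finset.range (s + 1 + 1),
        ((s : ℝ) + 1) * (rbinom x i * rbinom y (s + 1 - i)) =
          (i : ℝ) * (rbinom x i * rbinom y (s + 1 - i)) +
          ((s + 1 - i : ℕ) : ℝ) * (rbinom x i * rbinom y (s + 1 - i)) := by
      intro i hi
      have hi' : i ≤ s + 1 := by
        have := Finset.mem_range.1 hi; omega
      have hc : ((s + 1 - i : ℕ) : ℝ) = (s : ℝ) + 1 - i := by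
        rw [Nat.cast_sub hi']; push_cast; ring
      rw [hc]; ring
    have sum1 : ∑ i ∈ Finset.range (s + 1 + 1),
        (i : ℝ) * (rbinom x i * rbinom y (s + 1 - i)) = x * rbinom (x - 1 + y) s := by
      have e : ∑ i ∈ Finset.range (s + 1), x * (rbinom (x - 1) i * rbinom y (s - i)) =
          x * rbinom (x - 1 + y) s := by
        rw [← Finset.mul_sum, ih (x - 1) y]
      rw [← e, Finset.sum_range_succ']
      simp only [Nat.cast_zero, zero_mul, add_zero]
      apply Finset.sum_congr rfl
      intro i hi
      have h1 : s + 1 - (i + 1) = s - i := by omega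
      rw [h1]
      push_cast
      rw [show ((i : ℝ) + 1) * (rbinom x (i + 1) * rbinom y (s - i)) =
        (((i : ℝ) + 1) * rbinom x (i + 1)) * rbinom y (s - i) from by ring,
        rbinom_succ_mul x i]
      ring
    have sum2 : ∑ i ∈ Finset.range (s + 1 + 1),
        ((s + 1 - i : ℕ) : ℝ) * (rbinom x i * rbinom y (s + 1 - i)) =
          y * rbinom (x + (y - 1)) s := by
      rw [Finset.sum_range_succ]
      simp only [Nat.sub_self, Nat.cast_zero, zero_mul, add_zero]
      have : ∀ i ∈ Finset.range (s + 1),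
          ((s + 1 - i : ℕ) : ℝ) * (rbinom x i * rbinom y (s + 1 - i)) =
            y * (rbinom x i * rbinom (y - 1) (s - i)) := by
        intro i hi
        have hi' : i ≤ s := by have := Finset.mem_range.1 hi; omega
        have h1 : s + 1 - i = (s - i) + 1 := by omega
        have h2 : ((s + 1 - i : ℕ) : ℝ) = ((s - i : ℕ) : ℝ) + 1 := by
          rw [h1]; push_cast; ring
        rw [h2, h1]
        calc (((s - i : ℕ) : ℝ) + 1) * (rbinom x i * rbinom y ((s - i) + 1))
            = rbinom x i * ((((s - i : ℕ) : ℝ) + 1) * rbinom y ((s - i) + 1)) := by ring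
          _ = rbinom x i * (y * rbinom (y - 1) (s - i)) := by rw [rbinom_succ_mul]
          _ = y * (rbinom x i * rbinom (y - 1) (s - i)) := by ring
      rw [Finset.sum_congr rfl this, ← Finset.mul_sum, ih x (y - 1)]
    rw [Finset.mul_sum, Finset.sum_congr rfl step, Finset.sum_add_distrib, sum1, sum2]
    have h3 : x - 1 + y = x + y - 1 := by ring
    have h4 : x + (y - 1) = x + y - 1 := by ring
    rw [h3, h4, rbinom_succ_mul (x + y) s]
    ring

lemma rbinom_nat_eq_zero {n i : ℕ} (h : n < i) : rbinom (n : ℝ) i = 0 := by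
  rw [rbinom_nat_cast, Nat.choose_eq_zero_of_lt h, Nat.cast_zero]

lemma vandermonde_trunc (n s : ℕ) (y : ℝ) :
    ∑ i ∈ Finset.range (n + 1),
      (if i ≤ s then rbinom (n : ℝ) i * rbinom y (s - i) else 0) = rbinom ((n : ℝ) + y) s := by
  have hA : ∑ i ∈ Finset.range (n + 1),
      (if i ≤ s then rbinom (n : ℝ) i * rbinom y (s - i) else 0) =
      ∑ i ∈ Finset.range (n + s + 1),
      (if i ≤ s then rbinom (n : ℝ) i * rbinom y (s - i) else 0) := by
    apply Finset.sum_subset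
    · apply Finset.range_subset_range.2; omega
    · intro i hi hni
      have h1 : n < i := by
        simp only [Finset.mem_range] at hi hni; omega
      split
      · rw [rbinom_nat_eq_zero h1, zero_mul]
      · rfl
  have hB : ∑ i ∈ Finset.range (s + 1), rbinom (n : ℝ) i * rbinom y (s - i) =
      ∑ i ∈ Finset.range (n + s + 1),
      (if i ≤ s then rbinom (n : ℝ) i * rbinom y (s - i) else 0) := by
    rw [show (∑ i ∈ Finset.range (s + 1), rbinom (n : ℝ) i * rbinom y (s - i)) =
      ∑ i ∈ Finset.range (s + 1),
        (if i ≤ s then rbinom (n : ℝ) i * rbinom y (s - i) else 0) from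
      Finset.sum_congr rfl (fun i hi => by
        rw [if_pos (by simp only [Finset.mem_range] at hi; omega)])]
    apply Finset.sum_subset
    · apply Finset.range_subset_range.2; omega
    · intro i hi hni
      have h1 : ¬ i ≤ s := by simp only [Finset.mem_range] at hi hni; omega
      rw [if_neg h1]
  rw [hA, ← hB, rbinom_vandermonde s (n : ℝ) y]

noncomputable def aCoef (μ : ℝ) (k : ℕ) : ℝ :=
  (∏ i ∈ Finset.range k, (μ + i)) / (Nat.factorial k)

lemma aCoef_eq_rbinom (μ : ℝ) (k : ℕ) :
    aCoef μ k = (-1 : ℝ) ^ k * rbinom (-μ) k := by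
  rw [aCoef, rbinom]
  have h : ∏ i ∈ Finset.range k, (-μ - (i : ℝ)) =
      (-1 : ℝ) ^ k * ∏ i ∈ Finset.range k, (μ + i) := by
    calc ∏ i ∈ Finset.range k, (-μ - (i : ℝ))
        = ∏ i ∈ Finset.range k, ((-1 : ℝ) * (μ + i)) :=
          Finset.prod_congr rfl (fun i _ => by ring)
      _ = (-1 : ℝ) ^ k * ∏ i ∈ Finset.range k, (μ + i) := by
          rw [Finset.prod_mul_distrib, Finset.prod_const, Finset.card_range]
  rw [h, ← mul_div_assoc, ← mul_assoc, ← pow_add, Even.neg_one_pow ⟨k, rfl⟩, one_mul]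

lemma gamma_prod (μ : ℝ) (hμ : 0 < μ) (k : ℕ) :
    Real.Gamma (μ + k) = (∏ i ∈ Finset.range k, (μ + i)) * Real.Gamma μ := by
  induction k with
  | zero => simp
  | succ k ih =>
    have h : μ + ((k + 1 : ℕ) : ℝ) = (μ + k) + 1 := by push_cast; ring
    have hne : μ + (k : ℝ) ≠ 0 := by positivity
    rw [h, Real.Gamma_add_one hne, ih, Finset.prod_range_succ]
    ring

lemma coeff_identity (n m j : ℕ) (α : ℝ) (hj : j ≤ n + m) :
    ∑ i ∈ Finset.range (n + 1),
      (-1 : ℝ) ^ (n - i) * (n.choose i : ℝ) *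
        (if j ≤ m + i then aCoef ((n : ℝ) - α) (m + i - j) else 0)
      = (-1 : ℝ) ^ (n + m - j) * rbinom α (n + m - j) := by
  set s : ℕ := n + m - j with hs
  rw [← Finset.sum_range_reflect]
  simp only [Nat.add_sub_cancel]
  have step : ∀ i ∈ Finset.range (n + 1),
      (-1 : ℝ) ^ (n - (n - i)) * (n.choose (n - i) : ℝ) *
        (if j ≤ m + (n - i) then aCoef ((n : ℝ) - α) (m + (n - i) - j) else 0) =
      (-1 : ℝ) ^ s * (if i ≤ s then rbinom (n : ℝ) i * rbinom (α - n) (s - i) else 0) := by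
    intro i hi
    have hin : i ≤ n := by simp only [Finset.mem_range] at hi; omega
    have h1 : n - (n - i) = i := by omega
    have h2 : n.choose (n - i) = n.choose i := Nat.choose_symm hin
    rw [h1, h2]
    by_cases hc : i ≤ s
    · have hc' : j ≤ m + (n - i) := by omega
      have h3 : m + (n - i) - j = s - i := by omega
      rw [if_pos hc', if_pos hc, h3, aCoef_eq_rbinom,
        show -((n : ℝ) - α) = α - n from by ring, rbinom_nat_cast n i]
      rw [show (-1 : ℝ) ^ i * (n.choose i : ℝ) *
          ((-1 : ℝ) ^ (s - i) * rbinom (α - n) (s - i)) =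
          ((-1 : ℝ) ^ i * (-1 : ℝ) ^ (s - i)) *
            ((n.choose i : ℝ) * rbinom (α - n) (s - i)) from by ring,
        ← pow_add, show i + (s - i) = s from by omega]
    · have hc' : ¬ j ≤ m + (n - i) := by omega
      rw [if_neg hc', if_neg hc, mul_zero, mul_zero]
  rw [Finset.sum_congr rfl step, ← Finset.mul_sum, vandermonde_trunc n s (α - n),
    show (n : ℝ) + (α - n) = α from by ring]

/-- The Riemann delta right fractional difference coincides with the
binomial one on the grid t = b−(n−α)−m, where G = ₑΔ^{−(n−α)} f. -/
theorem delta_right_riemann_eq_binomial (b α : ℝ) (n : ℕ)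
    (hα : 0 < α) (hn1 : (n : ℝ) - 1 < α) (hn2 : α < n) (f G : ℝ → ℝ)
    (hG : ∀ q : ℕ, G (b - ((n : ℝ) - α) - q) =
      (1 / Real.Gamma ((n : ℝ) - α)) *
        ∑ j ∈ Finset.range (q + 1),
          Real.Gamma (b - j - (b - ((n : ℝ) - α) - q)) /
            Real.Gamma (b - j - (b - ((n : ℝ) - α) - q) - ((n : ℝ) - α) + 1) *
            f (b - j)) :
    ∀ m : ℕ,
      ∑ i ∈ Finset.range (n + 1),
        (-1 : ℝ) ^ (n - i) * (n.choose i : ℝ) * G ((b - ((n : ℝ) - α) - m) - i)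
      = ∑ k ∈ Finset.range (n + m + 1),
        (-1 : ℝ) ^ k * rbinom α k * f (b - n - m + k) := by
  intro m
  set μ : ℝ := (n : ℝ) - α with hμdef
  have hμ : 0 < μ := sub_pos.2 hn2
  have hΓ : Real.Gamma μ ≠ 0 := ne_of_gt (Real.Gamma_pos_of_pos hμ)
  have key : ∀ q : ℕ, G (b - μ - q) =
      ∑ j ∈ Finset.range (q + 1), aCoef μ (q - j) * f (b - j) := by
    intro q
    rw [hG q, Finset.mul_sum]
    apply Finset.sum_congr rfl
    intro j hj
    have hjq : j ≤ q := by simp only [Finset.mem_range] at hj; omega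
    have harg : b - (j : ℝ) - (b - μ - q) = μ + ((q - j : ℕ) : ℝ) := by
      rw [Nat.cast_sub hjq]; ring
    have harg2 : b - (j : ℝ) - (b - μ - q) - μ + 1 = ((q - j : ℕ) : ℝ) + 1 := by
      rw [Nat.cast_sub hjq]; ring
    have hfact : ((Nat.factorial (q - j) : ℝ)) ≠ 0 :=
      Nat.cast_ne_zero.2 (Nat.factorial_ne_zero _)
    rw [harg2, harg, gamma_prod μ hμ (q - j), Real.Gamma_nat_eq_factorial (q - j), aCoef]
    field_simp
  have lhs_eq : ∀ i : ℕ, i ≤ n → G ((b - μ - m) - i) =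
      ∑ j ∈ Finset.range (n + m + 1),
        (if j ≤ m + i then aCoef μ (m + i - j) else 0) * f (b - j) := by
    intro i hin
    have h1 : (b - μ - (m : ℝ)) - (i : ℝ) = b - μ - ((m + i : ℕ) : ℝ) := by
      push_cast; ring
    rw [h1, key (m + i)]
    rw [show (∑ j ∈ Finset.range (m + i + 1), aCoef μ (m + i - j) * f (b - j)) =
        ∑ j ∈ Finset.range (m + i + 1),
          (if j ≤ m + i then aCoef μ (m + i - j) else 0) * f (b - j) from
      Finset.sum_congr rfl (fun j hj => by
        rw [if_pos (by simp only [Finset.mem_range] at hj; omega)])]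
    apply Finset.sum_subset (Finset.range_subset_range.2 (by omega))
    intro j hj hnj
    rw [if_neg (by simp only [Finset.mem_range] at hj hnj; omega), zero_mul]
  calc ∑ i ∈ Finset.range (n + 1),
        (-1 : ℝ) ^ (n - i) * (n.choose i : ℝ) * G ((b - μ - m) - i)
      = ∑ i ∈ Finset.range (n + 1), ∑ j ∈ Finset.range (n + m + 1),
          (-1 : ℝ) ^ (n - i) * (n.choose i : ℝ) *
            ((if j ≤ m + i then aCoef μ (m + i - j) else 0) * f (b - j)) := by
        apply Finset.sum_congr rfl; intro i hi
        rw [lhs_eq i (by simp only [Finset.mem_range] at hi; omega), Finset.mul_sum]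
    _ = ∑ j ∈ Finset.range (n + m + 1),
          (∑ i ∈ Finset.range (n + 1),
            (-1 : ℝ) ^ (n - i) * (n.choose i : ℝ) *
              (if j ≤ m + i then aCoef μ (m + i - j) else 0)) * f (b - j) := by
        rw [Finset.sum_comm]
        apply Finset.sum_congr rfl; intro j _
        rw [Finset.sum_mul]
        apply Finset.sum_congr rfl; intro i _; ring
    _ = ∑ j ∈ Finset.range (n + m + 1),
          ((-1 : ℝ) ^ (n + m - j) * rbinom α (n + m - j)) * f (b - j) := by
        apply Finset.sum_congr rfl; intro j hj
        rw [coeff_identity n m j α (by simp only [Finset.mem_range] at hj; omega)]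
    _ = ∑ k ∈ Finset.range (n + m + 1),
          (-1 : ℝ) ^ k * rbinom α k * f (b - n - m + k) := by
        rw [← Finset.sum_range_reflect
          (fun k => (-1 : ℝ) ^ k * rbinom α k * f (b - (n : ℝ) - (m : ℝ) + (k : ℝ)))
          (n + m + 1)]
        apply Finset.sum_congr rfl
        intro j hj
        have hjnm : j ≤ n + m := by simp only [Finset.mem_range] at hj; omega
        simp only [Nat.add_sub_cancel]
        rw [show b - (n : ℝ) - (m : ℝ) + ((n + m - j : ℕ) : ℝ) = b - (j : ℝ) from by
          rw [Nat.cast_sub hjnm]; push_cast; ring]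
end
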